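/- arXiv:2310.16350 — 3 statements merged into one kernel-verified Lean document; each statement's English description precedes it below -/
import Mathlib

section
/- Let (X, Y) be centered jointly Gaussian real random variables with Var(X) = Var(Y) = σ² > 0 and correlation cos(α) for some α ∈ [0, π]. Then E[max(X,0) · max(Y,0)] = (σ²/(2π)) · (sin α + (π − α) cos α). -/
/-!
Write `(X, Y) = σ • (Z₁, cos α · Z₁ + sin α · Z₂)` with `Z` standard Gaussian on `ℝ²`. The
integrand `max x 0 * max y 0` is positively homogeneous of degree 2, so in polar coordinates the
Gaussian integral factors into the radial moment `∫₀^∞ r³ e^{-r²/2} dr = 2` and an angular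
integral of `max (cos θ) 0 * max (cos (θ - α)) 0`. For `α ∈ [0, π]` the latter is supported on
`(α - π/2, π/2)`, where `cos θ cos (θ - α) = (cos α + cos (2θ - α)) / 2` integrates in closed form.
-/

open MeasureTheory ProbabilityTheory Real Set

theorem max_mul_zero_of_nonneg {r : ℝ} (hr : 0 ≤ r) (x : ℝ) : max (r * x) 0 = r * max x 0 := by
  rw [mul_max_of_nonneg _ _ hr, mul_zero]

theorem max_zero_mul_max_zero_smul {r : ℝ} (hr : 0 ≤ r) (z : ℝ × ℝ) :
    max (r • z).1 0 * max (r • z).2 0 = r ^ 2 * (max z.1 0 * max z.2 0) := by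
  simp only [Prod.smul_fst, Prod.smul_snd, smul_eq_mul, max_mul_zero_of_nonneg hr]
  ring

theorem cos_nonpos_of_pi_div_two_le_abs {x : ℝ} (h₁ : π / 2 ≤ |x|) (h₂ : |x| ≤ π + π / 2) :
    cos x ≤ 0 :=
  cos_abs x ▸ cos_nonpos_of_pi_div_two_le_of_le h₁ h₂

theorem max_cos_zero_mul_max_cos_sub_zero_eq_indicator {α θ : ℝ} (hα : α ∈ Icc 0 π)
    (hθ : θ ∈ Ioo (-π) π) :
    max (cos θ) 0 * max (cos (θ - α)) 0 =
      (Ioo (α - π / 2) (π / 2)).indicator (fun θ => cos θ * cos (θ - α)) θ := by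
  obtain ⟨hα₀, hαπ⟩ := hα
  obtain ⟨hθ₁, hθ₂⟩ := hθ
  by_cases hmem : θ ∈ Ioo (α - π / 2) (π / 2)
  · have ⟨h₁, h₂⟩ := hmem
    rw [indicator_of_mem hmem,
      max_eq_left (cos_nonneg_of_mem_Icc ⟨by linarith, by linarith⟩),
      max_eq_left (cos_nonneg_of_mem_Icc ⟨by linarith, by linarith⟩)]
  · rw [indicator_of_notMem hmem]
    have hnonpos : cos θ ≤ 0 ∨ cos (θ - α) ≤ 0 := by
      rcases not_and_or.mp hmem with h | h <;> rw [not_lt] at h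
      · by_cases h' : α - θ ≤ π + π / 2
        · exact Or.inr <| cos_nonpos_of_pi_div_two_le_abs
            (by rw [abs_of_neg (by linarith)]; linarith) (by rw [abs_of_neg (by linarith)]; linarith)
        · exact Or.inl <| cos_nonpos_of_pi_div_two_le_abs
            (by rw [abs_of_neg (by linarith)]; linarith) (by rw [abs_of_neg (by linarith)]; linarith)
      · exact Or.inl <| cos_nonpos_of_pi_div_two_le_abs
          (by rw [abs_of_pos (by linarith)]; linarith) (by rw [abs_of_pos (by linarith)]; linarith)
    rcases hnonpos with h | h <;> simp [max_eq_right h]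

theorem integral_cos_mul_cos_sub (α : ℝ) :
    ∫ θ in (α - π / 2)..(π / 2), cos θ * cos (θ - α) = (sin α + (π - α) * cos α) / 2 := by
  have hderiv (θ : ℝ) : HasDerivAt (fun θ => θ * cos α / 2 + sin (2 * θ - α) / 4)
      (cos θ * cos (θ - α)) θ := by
    have h := (((hasDerivAt_id θ).mul_const (cos α)).div_const 2).add
      ((((hasDerivAt_id θ).const_mul 2).sub_const α).sin.div_const 4)
    refine h.congr_deriv ?_
    simp only [id, cos_sub, cos_two_mul, sin_two_mul]
    ring
  rw [intervalIntegral.integral_eq_sub_of_hasDerivAt (fun θ _ => hderiv θ)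
      ((by fun_prop : Continuous _).intervalIntegrable _ _),
    show 2 * (π / 2) - α = π - α by ring, show 2 * (α - π / 2) - α = -(π - α) by ring,
    sin_neg, sin_pi_sub]
  ring

theorem integral_Ioo_max_cos_zero_mul_max_cos_sub_zero {α : ℝ} (hα : α ∈ Icc 0 π) :
    ∫ θ in Ioo (-π) π, max (cos θ) 0 * max (cos (θ - α)) 0 = (sin α + (π - α) * cos α) / 2 := by
  have hsub : Ioo (α - π / 2) (π / 2) ⊆ Ioo (-π) π :=
    Ioo_subset_Ioo (by linarith [hα.1, pi_pos]) (by linarith [pi_pos])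
  rw [setIntegral_congr_fun measurableSet_Ioo
      fun θ hθ => max_cos_zero_mul_max_cos_sub_zero_eq_indicator hα hθ,
    setIntegral_indicator measurableSet_Ioo, inter_eq_right.mpr hsub,
    ← integral_Ioc_eq_integral_Ioo, ← intervalIntegral.integral_of_le (by linarith [hα.2]),
    integral_cos_mul_cos_sub]

theorem integral_Ioi_pow_three_mul_exp_neg_sq_div_two :
    ∫ r in Ioi (0 : ℝ), r ^ 3 * exp (-r ^ 2 / 2) = 2 := by
  have h := integral_rpow_mul_exp_neg_mul_rpow (p := 2) (q := 3) (b := 1 / 2)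
    (by norm_num) (by norm_num) (by norm_num)
  norm_num [Gamma_two] at h
  refine Eq.trans (setIntegral_congr_fun measurableSet_Ioi fun r _ => ?_) h
  ring_nf

theorem integral_gaussianReal_prod_gaussianReal (f : ℝ × ℝ → ℝ) :
    ∫ z, f z ∂(gaussianReal 0 1).prod (gaussianReal 0 1) =
      (2 * π)⁻¹ * ∫ z : ℝ × ℝ, f z * exp (-(z.1 ^ 2 + z.2 ^ 2) / 2) := by
  rw [gaussianReal_of_var_ne_zero 0 one_ne_zero,
    prod_withDensity (measurable_gaussianPDF 0 1) (measurable_gaussianPDF 0 1),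
    integral_withDensity_eq_integral_toReal_smul (by fun_prop)
      (ae_of_all _ fun _ => ENNReal.mul_lt_top gaussianPDF_lt_top gaussianPDF_lt_top),
    ← Measure.volume_eq_prod, ← integral_const_mul]
  congr 1 with z
  simp only [ENNReal.toReal_mul, toReal_gaussianPDF, gaussianPDFReal_def, smul_eq_mul]
  push_cast
  rw [show -(z.1 ^ 2 + z.2 ^ 2) / 2 = -(z.1 - 0) ^ 2 / (2 * 1) + -(z.2 - 0) ^ 2 / (2 * 1) by ring,
    exp_add]
  field_simp
  rw [Real.sq_sqrt (by positivity)]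

theorem integral_mul_exp_neg_sq_div_two_of_homogeneous (f : ℝ × ℝ → ℝ)
    (hf : ∀ r : ℝ, 0 < r → ∀ z, f (r • z) = r ^ 2 * f z) :
    ∫ z : ℝ × ℝ, f z * exp (-(z.1 ^ 2 + z.2 ^ 2) / 2) =
      2 * ∫ θ in Ioo (-π) π, f (cos θ, sin θ) := by
  rw [← integral_comp_polarCoord_symm, show polarCoord.target = Ioi 0 ×ˢ Ioo (-π) π from rfl,
    setIntegral_congr_fun (measurableSet_Ioi.prod measurableSet_Ioo)
      (g := fun p : ℝ × ℝ => p.1 ^ 3 * exp (-p.1 ^ 2 / 2) * f (cos p.2, sin p.2)),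
    Measure.volume_eq_prod, ← Measure.prod_restrict,
    integral_prod_mul (f := fun r : ℝ => r ^ 3 * exp (-r ^ 2 / 2)) (g := fun θ => f (cos θ, sin θ)),
    integral_Ioi_pow_three_mul_exp_neg_sq_div_two]
  rintro ⟨r, θ⟩ ⟨hr, -⟩
  have hpolar : polarCoord.symm (r, θ) = r • (cos θ, sin θ) := by
    simp [polarCoord_symm_apply]
  have hnorm : (r * cos θ) ^ 2 + (r * sin θ) ^ 2 = r ^ 2 := by
    linear_combination r ^ 2 * sin_sq_add_cos_sq θ
  dsimp only
  rw [hpolar, hf r hr]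
  simp only [Prod.smul_fst, Prod.smul_snd, smul_eq_mul, hnorm]
  ring

theorem integral_max_zero_mul_max_zero_gaussianReal_prod {α : ℝ} (hα : α ∈ Icc 0 π) :
    ∫ z, max z.1 0 * max (cos α * z.1 + sin α * z.2) 0
        ∂(gaussianReal 0 1).prod (gaussianReal 0 1) =
      (sin α + (π - α) * cos α) / (2 * π) := by
  have hhom (r : ℝ) (hr : 0 < r) (z : ℝ × ℝ) :
      max (r • z).1 0 * max (cos α * (r • z).1 + sin α * (r • z).2) 0 =
        r ^ 2 * (max z.1 0 * max (cos α * z.1 + sin α * z.2) 0) := by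
    rw [← max_zero_mul_max_zero_smul hr.le (z.1, cos α * z.1 + sin α * z.2)]
    simp only [Prod.smul_fst, Prod.smul_snd, smul_eq_mul]
    ring_nf
  rw [integral_gaussianReal_prod_gaussianReal,
    integral_mul_exp_neg_sq_div_two_of_homogeneous _ hhom]
  simp only [mul_comm (cos α), mul_comm (sin α), ← cos_sub]
  rw [integral_Ioo_max_cos_zero_mul_max_cos_sub_zero hα]
  field_simp

theorem stmt_0_general {Ω : Type*} [MeasurableSpace Ω] (P : Measure Ω)
    (X Y : Ω → ℝ) (σ α : ℝ) (hσ : 0 < σ) (hα : α ∈ Set.Icc 0 π)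
    (hlaw : Measure.map (fun ω => (X ω, Y ω)) P =
      Measure.map
        (fun z : ℝ × ℝ => (σ * z.1, σ * (Real.cos α * z.1 + Real.sin α * z.2)))
        ((gaussianReal 0 1).prod (gaussianReal 0 1))) :
    ∫ ω, max (X ω) 0 * max (Y ω) 0 ∂P =
      σ ^ 2 / (2 * π) * (Real.sin α + (π - α) * Real.cos α) := by
  set T : ℝ × ℝ → ℝ × ℝ := fun z => (σ * z.1, σ * (cos α * z.1 + sin α * z.2))
  have hT : Measurable T := by fun_prop
  have hrelu : Continuous fun p : ℝ × ℝ => max p.1 0 * max p.2 0 := by fun_prop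
  -- A non-a.e.-measurable map would have the zero measure as its law.
  have hXY : AEMeasurable (fun ω => (X ω, Y ω)) P := by
    have := Measure.isProbabilityMeasure_map
      (μ := (gaussianReal 0 1).prod (gaussianReal 0 1)) hT.aemeasurable
    exact .of_map_ne_zero (hlaw ▸ IsProbabilityMeasure.ne_zero _)
  calc ∫ ω, max (X ω) 0 * max (Y ω) 0 ∂P
      = ∫ z, max (σ • (z.1, cos α * z.1 + sin α * z.2)).1 0 *
          max (σ • (z.1, cos α * z.1 + sin α * z.2)).2 0
          ∂(gaussianReal 0 1).prod (gaussianReal 0 1) := by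
        rw [← integral_map hXY hrelu.aestronglyMeasurable, hlaw,
          integral_map hT.aemeasurable hrelu.aestronglyMeasurable]
        rfl
    _ = σ ^ 2 * ((sin α + (π - α) * cos α) / (2 * π)) := by
        simp only [max_zero_mul_max_zero_smul hσ.le, integral_const_mul,
          integral_max_zero_mul_max_zero_gaussianReal_prod hα]
    _ = _ := by ring

theorem stmt_0 {Ω : Type*} [MeasurableSpace Ω] (P : Measure Ω) [IsProbabilityMeasure P]
    (X Y : Ω → ℝ) (σ α : ℝ) (hσ : 0 < σ) (hα : α ∈ Set.Icc 0 π)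
    (hlaw : Measure.map (fun ω => (X ω, Y ω)) P =
      Measure.map
        (fun z : ℝ × ℝ => (σ * z.1, σ * (Real.cos α * z.1 + Real.sin α * z.2)))
        ((gaussianReal 0 1).prod (gaussianReal 0 1))) :
    ∫ ω, max (X ω) 0 * max (Y ω) 0 ∂P =
      σ ^ 2 / (2 * π) * (Real.sin α + (π - α) * Real.cos α) :=
  stmt_0_general P X Y σ α hσ hα hlaw
end

section
/- Fix K ≥ 1 and σ > 0, and let w_1, …, w_K, w'_1, …, w'_K be i.i.d. real random variables with distribution N(0, σ²). For 0 ≤ n ≤ K define F(n) = E[φ(Σ_{i=1}^K w_i) · φ(Σ_{i=1}^n w_i + Σ_{i=n+1}^K w'_i)] and H(n) = E[𝔻(Σ_{i=1}^K w_i) · 𝔻(Σ_{i=1}^n w_i + Σ_{i=n+1}^K w'_i)], where φ(z) = max(z, 0) and 𝔻(z) = 1 if z > 0 and 0 otherwise. Then F and H are monotonically nondecreasing: for all integers 0 ≤ n ≤ n' ≤ K, F(n') ≥ F(n) and H(n') ≥ H(n). -/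
/-!
STATEMENT 8: Monotonicity of the CNN infinite-width kernel functions `F` and `H`.

`w_1, …, w_K, w'_1, …, w'_K` are i.i.d. `N(0, σ²)` random variables, realized
canonically on the product space `(Fin K → ℝ) × (Fin K → ℝ)` equipped with the product
of Gaussian product measures. For `0 ≤ n ≤ K`,
`F(n) = E[φ(Σ_{i=1}^K w_i) · φ(Σ_{i=1}^n w_i + Σ_{i=n+1}^K w'_i)]` and
`H(n) = E[𝔻(Σ_{i=1}^K w_i) · 𝔻(Σ_{i=1}^n w_i + Σ_{i=n+1}^K w'_i)]`,
where `φ(z) = max(z,0)` and `𝔻(z) = 1` if `z > 0` and `0` otherwise. Both are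
monotonically nondecreasing in `n`.
-/

open MeasureTheory ProbabilityTheory Real Finset
open scoped NNReal

/-- The product measure on `(Fin K → ℝ) × (Fin K → ℝ)` whose `2K` real coordinates are
i.i.d. centered Gaussians with variance `v`. -/
noncomputable def gaussPair (K : ℕ) (v : ℝ≥0) :
    Measure ((Fin K → ℝ) × (Fin K → ℝ)) :=
  (Measure.pi fun _ : Fin K => gaussianReal 0 v).prod
    (Measure.pi fun _ : Fin K => gaussianReal 0 v)

/-- `Σ_{i=1}^n w_i + Σ_{i=n+1}^K w'_i`. -/
noncomputable def mixSum {K : ℕ} (n : ℕ) (p : (Fin K → ℝ) × (Fin K → ℝ)) : ℝ :=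
  ∑ i : Fin K, if (i : ℕ) < n then p.1 i else p.2 i

/-- `F(n) = E[φ(Σ_{i=1}^K w_i) · φ(Σ_{i=1}^n w_i + Σ_{i=n+1}^K w'_i)]` with
`φ(z) = max(z,0)` the ReLU function. -/
noncomputable def Fker (K : ℕ) (v : ℝ≥0) (n : ℕ) : ℝ :=
  ∫ p, max (∑ i : Fin K, p.1 i) 0 * max (mixSum n p) 0 ∂(gaussPair K v)

/-- `H(n) = E[𝔻(Σ_{i=1}^K w_i) · 𝔻(Σ_{i=1}^n w_i + Σ_{i=n+1}^K w'_i)]` with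
`𝔻(z) = 1` if `z > 0` and `0` otherwise. -/
noncomputable def Hker (K : ℕ) (v : ℝ≥0) (n : ℕ) : ℝ :=
  ∫ p, (if 0 < ∑ i : Fin K, p.1 i then (1 : ℝ) else 0) *
    (if 0 < mixSum n p then (1 : ℝ) else 0) ∂(gaussPair K v)

/-
Going from `n` to `n + 1` replaces the summand `w'_{n+1}` of the second window by `w_{n+1}`.
The law of `(w, w')` is invariant under the involution `T` exchanging `w_{n+1}` and `w'_{n+1}`,
and `T` interchanges the `n`-window `M_n` and the `(n+1)`-window `M_{n+1}`. Hence, for monotone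
`ψ` and `S = Σ w_i`, the increment `E[ψ(S)(ψ(M_{n+1}) - ψ(M_n))]` is half of
`E[(ψ(S) - ψ(S ∘ T))(ψ(M_{n+1}) - ψ(M_n))]`, and both factors have the sign of
`w_{n+1} - w'_{n+1}`. Both `φ` and `𝔻` are monotone.
-/

section SwapCoord

variable {ι α : Type*} [DecidableEq ι] [MeasurableSpace α]

noncomputable def swapCoord (j : ι) : (ι → α) × (ι → α) ≃ᵐ (ι → α) × (ι → α) :=
  (MeasurableEquiv.arrowProdEquivProdArrow α α ι).symm.trans <|
    (MeasurableEquiv.piCongrRight fun i =>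
      if i = j then MeasurableEquiv.prodComm else MeasurableEquiv.refl (α × α)).trans
    (MeasurableEquiv.arrowProdEquivProdArrow α α ι)

theorem swapCoord_apply (j : ι) (p : (ι → α) × (ι → α)) :
    swapCoord j p = (Function.update p.1 j (p.2 j), Function.update p.2 j (p.1 j)) := by
  ext i <;> by_cases h : i = j <;>
    simp [swapCoord, MeasurableEquiv.arrowProdEquivProdArrow, Equiv.arrowProdEquivProdArrow,
      MeasurableEquiv.piCongrRight, Equiv.piCongrRight, MeasurableEquiv.prodComm, h]

theorem swapCoord_swapCoord (j : ι) (p : (ι → α) × (ι → α)) :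
    swapCoord j (swapCoord j p) = p := by
  simp [swapCoord_apply]

theorem measurePreserving_swapCoord [Fintype ι] (μ : ι → Measure α) [∀ i, SigmaFinite (μ i)]
    (j : ι) :
    MeasurePreserving (swapCoord j) ((Measure.pi μ).prod (Measure.pi μ))
      ((Measure.pi μ).prod (Measure.pi μ)) := by
  have hA := measurePreserving_arrowProdEquivProdArrow α α ι μ μ
  have hswap : MeasurePreserving
      (MeasurableEquiv.piCongrRight fun i =>
        if i = j then MeasurableEquiv.prodComm else MeasurableEquiv.refl (α × α))
      (Measure.pi fun i => (μ i).prod (μ i)) (Measure.pi fun i => (μ i).prod (μ i)) := by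
    refine measurePreserving_pi _ _ fun i => ?_
    by_cases h : i = j
    · simp only [h, if_true]
      exact Measure.measurePreserving_swap
    · simpa [h] using MeasurePreserving.id _
  exact hA.comp (hswap.comp hA.symm)

theorem sum_fst_sub_sum_fst_swapCoord [Fintype ι] (j : ι) (p : (ι → ℝ) × (ι → ℝ)) :
    ∑ i, p.1 i - ∑ i, (swapCoord j p).1 i = p.1 j - p.2 j := by
  rw [swapCoord_apply, sum_update_of_mem (mem_univ j), ← add_sum_erase _ _ (mem_univ j),
    sdiff_singleton_eq_erase]
  ring

end SwapCoord

theorem integral_nonneg_of_add_comp_nonneg {β : Type*} [MeasurableSpace β] {μ : Measure β}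
    {T : β ≃ᵐ β} (hT : MeasurePreserving T μ μ) {G : β → ℝ} (hG : Integrable G μ)
    (hGT : ∀ x, 0 ≤ G x + G (T x)) : 0 ≤ ∫ x, G x ∂μ := by
  have hGT_int : Integrable (fun x => G (T x)) μ :=
    (hT.integrable_comp_emb T.measurableEmbedding).2 hG
  have hsum : 0 ≤ ∫ x, (G x + G (T x)) ∂μ := integral_nonneg hGT
  rwa [integral_add hG hGT_int, hT.integral_comp' G, ← two_mul,
    mul_nonneg_iff_of_pos_left two_pos] at hsum

theorem Monotone.sub_mul_sub_nonneg {α β : Type*} [AddCommGroup α] [LinearOrder α]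
    [IsOrderedAddMonoid α] [Ring β] [PartialOrder β] [IsOrderedRing β] {ψ : α → β}
    (hψ : Monotone ψ) {x x' y y' : α} (h : x - x' = y - y') :
    0 ≤ (ψ x - ψ x') * (ψ y - ψ y') := by
  rcases le_total x x' with hx | hx
  · have hy : y ≤ y' := sub_nonpos.1 (h ▸ sub_nonpos.2 hx)
    exact mul_nonneg_of_nonpos_of_nonpos (sub_nonpos.2 (hψ hx)) (sub_nonpos.2 (hψ hy))
  · have hy : y' ≤ y := sub_nonneg.1 (h ▸ sub_nonneg.2 hx)
    exact mul_nonneg (sub_nonneg.2 (hψ hx)) (sub_nonneg.2 (hψ hy))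

section mixSum

variable {K n : ℕ}

theorem mixSum_succ_sub_mixSum (hn : n < K) (p : (Fin K → ℝ) × (Fin K → ℝ)) :
    mixSum (n + 1) p - mixSum n p = p.1 ⟨n, hn⟩ - p.2 ⟨n, hn⟩ := by
  rw [mixSum, mixSum, ← sum_sub_distrib, sum_eq_single ⟨n, hn⟩]
  · simp
  · intro i _ hi
    have : (i : ℕ) ≠ n := fun h => hi (Fin.ext h)
    rcases lt_or_gt_of_ne this with h | h
    · simp [h, h.trans (Nat.lt_succ_self n)]
    · simp [show ¬ (i : ℕ) < n by omega, show ¬ (i : ℕ) ≤ n by omega]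
  · simp

theorem mixSum_swapCoord (hn : n < K) (p : (Fin K → ℝ) × (Fin K → ℝ)) :
    mixSum n (swapCoord ⟨n, hn⟩ p) = mixSum (n + 1) p := by
  refine sum_congr rfl fun i _ => ?_
  rw [swapCoord_apply]
  rcases lt_trichotomy (i : ℕ) n with h | h | h
  · have : i ≠ ⟨n, hn⟩ := fun e => by simp [e] at h
    simp [h, h.trans (Nat.lt_succ_self n), this]
  · obtain rfl : i = ⟨n, hn⟩ := Fin.ext h
    simp
  · have : i ≠ ⟨n, hn⟩ := fun e => by simp [e] at h
    simp [show ¬ (i : ℕ) < n by omega, show ¬ (i : ℕ) ≤ n by omega, this]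

theorem mixSum_succ_swapCoord (hn : n < K) (p : (Fin K → ℝ) × (Fin K → ℝ)) :
    mixSum (n + 1) (swapCoord ⟨n, hn⟩ p) = mixSum n p := by
  rw [← mixSum_swapCoord hn, swapCoord_swapCoord]

end mixSum

section Monotonicity

variable {K : ℕ} {μ : Fin K → Measure ℝ} [∀ i, SigmaFinite (μ i)] {ψ : ℝ → ℝ}

theorem integral_mul_mixSum_le_succ (hψ : Monotone ψ) {n : ℕ} (hn : n < K)
    (hint : ∀ m, Integrable (fun p => ψ (∑ i, p.1 i) * ψ (mixSum m p))
      ((Measure.pi μ).prod (Measure.pi μ))) :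
    ∫ p, ψ (∑ i, p.1 i) * ψ (mixSum n p) ∂(Measure.pi μ).prod (Measure.pi μ) ≤
      ∫ p, ψ (∑ i, p.1 i) * ψ (mixSum (n + 1) p) ∂(Measure.pi μ).prod (Measure.pi μ) := by
  rw [← sub_nonneg, ← integral_sub (hint _) (hint _)]
  refine integral_nonneg_of_add_comp_nonneg (measurePreserving_swapCoord μ ⟨n, hn⟩)
    ((hint _).sub (hint _)) fun p => ?_
  have key := hψ.sub_mul_sub_nonneg ((sum_fst_sub_sum_fst_swapCoord ⟨n, hn⟩ p).trans
    (mixSum_succ_sub_mixSum hn p).symm)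
  rw [mixSum_swapCoord, mixSum_succ_swapCoord]
  linear_combination key

theorem monotoneOn_integral_mul_mixSum (hψ : Monotone ψ)
    (hint : ∀ m, Integrable (fun p => ψ (∑ i, p.1 i) * ψ (mixSum m p))
      ((Measure.pi μ).prod (Measure.pi μ))) :
    MonotoneOn (fun n => ∫ p, ψ (∑ i, p.1 i) * ψ (mixSum n p) ∂(Measure.pi μ).prod (Measure.pi μ))
      (Set.Iic K) :=
  monotoneOn_of_le_add_one Set.ordConnected_Iic fun _ _ _ hn =>
    integral_mul_mixSum_le_succ hψ hn hint

end Monotonicity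

section Integrability

variable {K : ℕ} {μ : Fin K → Measure ℝ} [∀ i, IsProbabilityMeasure (μ i)]

theorem measurable_mixSum (m : ℕ) : Measurable (mixSum (K := K) m) := by
  refine measurable_sum _ fun i _ => ?_
  by_cases h : (i : ℕ) < m <;> simp only [h, if_true, if_false] <;> fun_prop

theorem memLp_mixSum (hμ : ∀ i, MemLp id 2 (μ i)) (m : ℕ) :
    MemLp (mixSum m) 2 ((Measure.pi μ).prod (Measure.pi μ)) := by
  have hfst : ∀ i, MemLp (fun p : (Fin K → ℝ) × (Fin K → ℝ) => p.1 i) 2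
      ((Measure.pi μ).prod (Measure.pi μ)) := fun i =>
    (hμ i).comp_measurePreserving ((measurePreserving_eval μ i).comp measurePreserving_fst)
  have hsnd : ∀ i, MemLp (fun p : (Fin K → ℝ) × (Fin K → ℝ) => p.2 i) 2
      ((Measure.pi μ).prod (Measure.pi μ)) := fun i =>
    (hμ i).comp_measurePreserving ((measurePreserving_eval μ i).comp measurePreserving_snd)
  unfold mixSum
  refine memLp_finsetSum _ fun i _ => ?_
  by_cases h : (i : ℕ) < m <;> simp only [h, if_true, if_false]
  exacts [hfst i, hsnd i]

theorem sum_fst_eq_mixSum (p : (Fin K → ℝ) × (Fin K → ℝ)) : ∑ i, p.1 i = mixSum K p := by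
  simp [mixSum]

theorem integrable_relu_mul_relu_mixSum (hμ : ∀ i, MemLp id 2 (μ i)) (m : ℕ) :
    Integrable (fun p => max (∑ i, p.1 i) 0 * max (mixSum m p) 0)
      ((Measure.pi μ).prod (Measure.pi μ)) := by
  simp only [sum_fst_eq_mixSum]
  exact ((memLp_mixSum hμ K).sup (memLp_const 0)).integrable_mul
    ((memLp_mixSum hμ m).sup (memLp_const 0))

theorem integrable_step_mul_step_mixSum (m : ℕ) :
    Integrable (fun p => (if 0 < ∑ i, p.1 i then (1 : ℝ) else 0) *
      (if 0 < mixSum m p then (1 : ℝ) else 0)) ((Measure.pi μ).prod (Measure.pi μ)) := by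
  simp only [sum_fst_eq_mixSum]
  refine Integrable.of_bound (Measurable.aestronglyMeasurable ?_) 1
    (ae_of_all _ fun p => by split_ifs <;> norm_num)
  exact (measurable_const.ite (measurableSet_lt measurable_const (measurable_mixSum K))
    measurable_const).mul
      (measurable_const.ite (measurableSet_lt measurable_const (measurable_mixSum m))
        measurable_const)

end Integrability

theorem monotone_ite_pos_one_zero : Monotone fun z : ℝ => if 0 < z then (1 : ℝ) else 0 := by
  intro x y hxy
  dsimp only
  split_ifs <;> linarith

theorem stmt_8_general (K : ℕ) (σ : ℝ) :
    ∀ n n' : ℕ, n ≤ n' → n' ≤ K →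
      Fker K (σ ^ 2).toNNReal n ≤ Fker K (σ ^ 2).toNNReal n' ∧
      Hker K (σ ^ 2).toNNReal n ≤ Hker K (σ ^ 2).toNNReal n' := by
  intro n n' hle hn'
  have hn : n ∈ Set.Iic K := hle.trans hn'
  have hμ : ∀ _ : Fin K, MemLp id 2 (gaussianReal 0 (σ ^ 2).toNNReal) := fun _ =>
    memLp_id_gaussianReal' 2 ENNReal.ofNat_ne_top
  exact ⟨monotoneOn_integral_mul_mixSum (monotone_id.max monotone_const)
      (integrable_relu_mul_relu_mixSum hμ) hn hn' hle,
    monotoneOn_integral_mul_mixSum monotone_ite_pos_one_zero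
      integrable_step_mul_step_mixSum hn hn' hle⟩

theorem stmt_8 (K : ℕ) (hK : 1 ≤ K) (σ : ℝ) (hσ : 0 < σ) :
    ∀ n n' : ℕ, n ≤ n' → n' ≤ K →
      Fker K (σ ^ 2).toNNReal n ≤ Fker K (σ ^ 2).toNNReal n' ∧
      Hker K (σ ^ 2).toNNReal n ≤ Hker K (σ ^ 2).toNNReal n' :=
  stmt_8_general K σ
end

section
/- Let D be a finite training set of m labeled instances (x, y) with y ∈ {−1, +1} and let ρ > 0. Suppose a differentiable function s^{ab} : ℝ → ℝ and trajectories s^{(x)} : ℝ → ℝ satisfy, for all t, d s^{ab}/dt (t) = (ρ/m) Σ_{(x,y) ∈ D} g(−y s^{(x)}(t)) · y · ω(e_a e_b, x), where ω(e_a e_b, x) = Σ_{j=1}^{l(x)−1} (e_jᵀ e_a)(e_{j+1}ᵀ e_b) ≥ 0. If the bigram e_a e_b occurs in no negative instance (ω(e_a e_b, x) = 0 whenever y = −1) and occurs in at least one positive instance (ω(e_a e_b, x) > 0 for some (x, +1) ∈ D), then d s^{ab}/dt (t) > 0 for all t; in particular s^{ab} is strictly increasing. -/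
/-!
STATEMENT 14: Under the infinite-width NTK gradient-flow equation of the matrix-vector
(MV) model with logistic loss, a bigram occurring in no negative instance and in at
least one positive instance has a strictly increasing label score.

Tokens are elements of `Fin V`, identified with one-hot vectors. Instance `i` has
length `L i` and tokens `X i 0, …, X i (L i − 1)` (0-indexed), and label
`y i ∈ {−1,+1}`; `g` is the sigmoid function.
-/

open Real Finset

/-- Dot product of the one-hot vectors of two tokens. -/
noncomputable def tdot {V : ℕ} (a b : Fin V) : ℝ := if a = b then 1 else 0

/-- The sigmoid function `g(z) = 1/(1+e^{-z})`. -/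
noncomputable def sigmoid (z : ℝ) : ℝ := 1 / (1 + Real.exp (-z))

/-- `ω(e_a e_b, x) = Σ_{j=1}^{l−1} (e_jᵀ e_a)(e_{j+1}ᵀ e_b)`, the number of
occurrences of the bigram `e_a e_b` in an instance of length `l` with (0-indexed)
tokens `E : ℕ → Fin V`. -/
noncomputable def omegaBigram {V : ℕ} (l : ℕ) (E : ℕ → Fin V) (a b : Fin V) : ℝ :=
  ∑ j ∈ Finset.range (l - 1), tdot (E j) a * tdot (E (j + 1)) b

lemma sigmoid_pos (z : ℝ) : 0 < _root_.sigmoid z := by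
  unfold _root_.sigmoid
  positivity

lemma tdot_nonneg {V : ℕ} (a b : Fin V) : 0 ≤ tdot a b := by
  unfold tdot
  split_ifs <;> norm_num

lemma omegaBigram_nonneg {V : ℕ} (l : ℕ) (E : ℕ → Fin V) (a b : Fin V) :
    0 ≤ omegaBigram l E a b :=
  Finset.sum_nonneg fun _ _ => mul_nonneg (tdot_nonneg _ _) (tdot_nonneg _ _)

lemma sum_weight_mul_label_mul_count_pos {ι : Type*} [Fintype ι] (w y c : ι → ℝ)
    (hw : ∀ i, 0 < w i) (hc : ∀ i, 0 ≤ c i) (hy : ∀ i, y i = 1 ∨ y i = -1)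
    (hneg : ∀ i, y i = -1 → c i = 0) (hpos : ∃ i, y i = 1 ∧ 0 < c i) :
    0 < ∑ i, w i * y i * c i := by
  obtain ⟨i₀, hy₀, hc₀⟩ := hpos
  have hterm_nonneg : ∀ i ∈ univ, 0 ≤ w i * y i * c i := by
    intro i _
    rcases hy i with h | h
    · rw [h, mul_one]
      exact mul_nonneg (hw i).le (hc i)
    · rw [hneg i h, mul_zero]
  refine Finset.sum_pos' hterm_nonneg ⟨i₀, mem_univ _, ?_⟩
  rw [hy₀, mul_one]
  exact mul_pos (hw i₀) hc₀

theorem stmt_14_general {V m : ℕ}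
    (L : Fin m → ℕ) (X : Fin m → ℕ → Fin V) (y : Fin m → ℝ)
    (hy : ∀ i, y i = 1 ∨ y i = -1)
    (ρ : ℝ) (hρ : 0 < ρ)
    (a b : Fin V) (sab : ℝ → ℝ) (sx : Fin m → ℝ → ℝ)
    (hode : ∀ t : ℝ, deriv sab t =
      (ρ / m) * ∑ i : Fin m, _root_.sigmoid (-(y i) * sx i t) * y i *
        omegaBigram (L i) (X i) a b)
    (hneg : ∀ i, y i = -1 → omegaBigram (L i) (X i) a b = 0)
    (hpos : ∃ i, y i = 1 ∧ 0 < omegaBigram (L i) (X i) a b) :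
    (∀ t : ℝ, 0 < deriv sab t) ∧ StrictMono sab := by
  have hm : (0 : ℝ) < m := by
    obtain ⟨i, _⟩ := hpos
    exact_mod_cast i.pos
  have hderiv : ∀ t, 0 < deriv sab t := fun t => by
    rw [hode t]
    exact mul_pos (div_pos hρ hm) <|
      sum_weight_mul_label_mul_count_pos _ y _ (fun i => sigmoid_pos _)
        (fun i => omegaBigram_nonneg _ _ a b) hy hneg hpos
  exact ⟨hderiv, strictMono_of_deriv_pos hderiv⟩

theorem stmt_14 {V m : ℕ} (hm : 0 < m)
    (L : Fin m → ℕ) (X : Fin m → ℕ → Fin V) (y : Fin m → ℝ)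
    (hy : ∀ i, y i = 1 ∨ y i = -1)
    (ρ : ℝ) (hρ : 0 < ρ)
    (a b : Fin V) (sab : ℝ → ℝ) (hsab : Differentiable ℝ sab) (sx : Fin m → ℝ → ℝ)
    (hode : ∀ t : ℝ, deriv sab t =
      (ρ / m) * ∑ i : Fin m, _root_.sigmoid (-(y i) * sx i t) * y i *
        omegaBigram (L i) (X i) a b)
    (hneg : ∀ i, y i = -1 → omegaBigram (L i) (X i) a b = 0)
    (hpos : ∃ i, y i = 1 ∧ 0 < omegaBigram (L i) (X i) a b) :
    (∀ t : ℝ, 0 < deriv sab t) ∧ StrictMono sab :=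
  stmt_14_general L X y hy ρ hρ a b sab sx hode hneg hpos
end
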